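/- For every n ≥ 1, the complex of signed injective words on n letters is (n−1)-spherical: the augmented chain complex whose i-th term (for 0 ≤ i ≤ n−1) is the free abelian group on the set of (i+1)-tuples ((a_0, ε_0), …, (a_i, ε_i)) of elements of Fin n × ZMod 2 whose first coordinates a_0, …, a_i are pairwise distinct, with boundary map given by the alternating sum of deleting one entry, and with augmentation sending each 1-tuple to 1 ∈ ℤ in degree −1, is exact in every degree except n−1; that is, its reduced homology H̃_i vanishes for all i ≠ n−1. -/

import Mathlib

/-!
Fix a set `T` of frozen coordinates and a set `S` of free ones, disjoint from `T`. The words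
through every coordinate of `T` and otherwise using coordinates of `S`, with the boundary that
deletes only letters over free coordinates, form a complex that is acyclic in word lengths
below `|S| + |T|`. This goes by induction on `S`. For `a ∈ S`, the part of a cycle consisting
of the words through `a` is a cycle once `a` is frozen, hence by induction the frozen boundary
of a chain `y` through `a`; subtracting the full boundary of `y` leaves a cycle avoiding `a`,
and on chains avoiding `a`, prepending a letter over `a` is a contracting homotopy. Taking `S` to be all coordinates and `T = ∅` gives
exactness below the top degree; above it there are no injective words at all.
-/

open CategoryTheory

/-- Commutation rule for deleting two entries of a list. -/
theorem eraseIdx_eraseIdx_comm {α : Type*} :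
    ∀ (l : List α) (i j : ℕ), i ≤ j →
      (l.eraseIdx i).eraseIdx j = (l.eraseIdx (j + 1)).eraseIdx i := by
  intro l
  induction l with
  | nil => intro i j _; simp
  | cons a t ih =>
    intro i j hij
    match i, j with
    | 0, j => simp
    | i + 1, j + 1 =>
      simp only [List.eraseIdx_cons_succ]
      rw [ih i j (by omega)]

variable {α : Type} (P : List α → Prop) (hP : ∀ (l : List α) (j : ℕ), P l → P (l.eraseIdx j))

/-- Words (ordered tuples) of length `d` satisfying the admissibility predicate `P`:
the basis of the degree-`d` term of the augmented chain complex (a word of length `d`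
is a `(d-1)`-simplex, the empty word generating the augmentation `ℤ` in degree `-1`). -/
def Word (d : ℕ) : Type := {l : List α // P l ∧ l.length = d}

/-- Deletion of the `j`-th entry of a word. -/
def eraseWord {d : ℕ} (l : Word P (d + 1)) (j : Fin (d + 1)) : Word P d :=
  ⟨l.1.eraseIdx j, hP l.1 j l.2.1, by
    have h := l.2.2
    rw [List.length_eraseIdx_of_lt (by omega)]
    omega⟩

/-- The boundary map: the alternating sum of the entry deletions. -/
noncomputable def wordBoundary (d : ℕ) : (Word P (d + 1) →₀ ℤ) →ₗ[ℤ] (Word P d →₀ ℤ) :=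
  Finsupp.lsum ℤ fun l =>
    ∑ j : Fin (d + 1), ((-1 : ℤ) ^ (j : ℕ)) • Finsupp.lsingle (eraseWord P hP l j)

theorem wordBoundary_single {d : ℕ} (l : Word P (d + 1)) (b : ℤ) :
    wordBoundary P hP d (Finsupp.single l b)
      = ∑ j : Fin (d + 1), ((-1 : ℤ) ^ (j : ℕ)) • Finsupp.single (eraseWord P hP l j) b := by
  simp [wordBoundary, Finsupp.lsum_single, LinearMap.sum_apply, LinearMap.smul_apply,
    Finsupp.lsingle_apply]

/-- The sign-reversing involution on pairs of deletion indices, pairing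
`(j, i)` (first delete entry `j`, then entry `i`) with the pair of indices deleting
the same two entries in the other order. -/
def deletionInvolution (d : ℕ) :
    Fin (d + 2) × Fin (d + 1) → Fin (d + 2) × Fin (d + 1) := fun p =>
  if h : (p.2 : ℕ) < (p.1 : ℕ)
  then (⟨(p.2 : ℕ), by have := p.2.2; omega⟩, ⟨(p.1 : ℕ) - 1, by have := p.1.2; omega⟩)
  else (⟨(p.2 : ℕ) + 1, by have := p.2.2; omega⟩, ⟨(p.1 : ℕ), by have := p.2.2; omega⟩)

theorem deletionInvolution_of_lt {d : ℕ} {j : Fin (d + 2)} {i : Fin (d + 1)}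
    (h : (i : ℕ) < (j : ℕ)) :
    deletionInvolution d (j, i)
      = (⟨(i : ℕ), by have := i.2; omega⟩, ⟨(j : ℕ) - 1, by have := j.2; omega⟩) := by
  simp only [deletionInvolution]
  exact dif_pos h

theorem deletionInvolution_of_ge {d : ℕ} {j : Fin (d + 2)} {i : Fin (d + 1)}
    (h : ¬ (i : ℕ) < (j : ℕ)) :
    deletionInvolution d (j, i)
      = (⟨(i : ℕ) + 1, by have := i.2; omega⟩, ⟨(j : ℕ), by have := i.2; omega⟩) := by
  simp only [deletionInvolution]
  exact dif_neg h

theorem wordBoundary_comp_wordBoundary (d : ℕ) :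
    (wordBoundary P hP d).comp (wordBoundary P hP (d + 1)) = 0 := by
  apply Finsupp.lhom_ext
  intro l b
  rw [LinearMap.comp_apply, wordBoundary_single, map_sum, LinearMap.zero_apply]
  set f : Fin (d + 2) × Fin (d + 1) → (Word P d →₀ ℤ) := fun p =>
    (((-1 : ℤ) ^ (p.1 : ℕ)) * ((-1 : ℤ) ^ (p.2 : ℕ))) •
      Finsupp.single (eraseWord P hP (eraseWord P hP l p.1) p.2) b with hf
  have step : ∀ j : Fin (d + 2),
      wordBoundary P hP d (((-1 : ℤ) ^ (j : ℕ)) • Finsupp.single (eraseWord P hP l j) b)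
        = ∑ i : Fin (d + 1), f (j, i) := by
    intro j
    simp only [hf]
    rw [map_smul, wordBoundary_single, Finset.smul_sum]
    exact Finset.sum_congr rfl fun i _ => smul_smul _ _ _
  rw [Finset.sum_congr rfl (fun j _ => step j), ← Fintype.sum_prod_type]
  apply Finset.sum_ninvolution (deletionInvolution d)
  · -- the two terms of a matched pair cancel
    rintro ⟨j, i⟩
    by_cases h : (i : ℕ) < (j : ℕ)
    · rw [deletionInvolution_of_lt h]
      simp only [hf]
      have hword : eraseWord P hP (eraseWord P hP l ⟨(i : ℕ), by have := i.2; omega⟩)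
            ⟨(j : ℕ) - 1, by have := j.2; omega⟩
          = eraseWord P hP (eraseWord P hP l j) i := by
        apply Subtype.ext
        show (l.1.eraseIdx (i : ℕ)).eraseIdx ((j : ℕ) - 1) = (l.1.eraseIdx (j : ℕ)).eraseIdx i
        rw [eraseIdx_eraseIdx_comm l.1 (i : ℕ) ((j : ℕ) - 1) (by omega)]
        congr 2
        omega
      rw [hword, ← add_smul]
      have hcoef : ((-1 : ℤ) ^ (j : ℕ) * (-1 : ℤ) ^ (i : ℕ)
          + (-1 : ℤ) ^ (i : ℕ) * (-1 : ℤ) ^ ((j : ℕ) - 1)) = 0 := by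
        obtain ⟨m, hm⟩ : ∃ m, (j : ℕ) = m + 1 := ⟨(j : ℕ) - 1, by omega⟩
        rw [hm]
        simp only [Nat.add_sub_cancel]
        rw [pow_succ]
        ring
      rw [hcoef, zero_smul]
    · rw [deletionInvolution_of_ge h]
      simp only [hf]
      have hword : eraseWord P hP (eraseWord P hP l ⟨(i : ℕ) + 1, by have := i.2; omega⟩)
            ⟨(j : ℕ), by have := i.2; omega⟩
          = eraseWord P hP (eraseWord P hP l j) i := by
        apply Subtype.ext
        show (l.1.eraseIdx ((i : ℕ) + 1)).eraseIdx (j : ℕ) = (l.1.eraseIdx (j : ℕ)).eraseIdx i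
        rw [← eraseIdx_eraseIdx_comm l.1 (j : ℕ) (i : ℕ) (by omega)]
      rw [hword, ← add_smul]
      have hcoef : ((-1 : ℤ) ^ (j : ℕ) * (-1 : ℤ) ^ (i : ℕ)
          + (-1 : ℤ) ^ ((i : ℕ) + 1) * (-1 : ℤ) ^ (j : ℕ)) = 0 := by
        rw [pow_succ]
        ring
      rw [hcoef, zero_smul]
  · -- the involution has no fixed point with nonzero contribution
    rintro ⟨j, i⟩ _
    by_cases h : (i : ℕ) < (j : ℕ)
    · rw [deletionInvolution_of_lt h]
      intro hcon
      have h1 : (i : ℕ) = (j : ℕ) :=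
        congrArg (fun q : Fin (d + 2) × Fin (d + 1) => (q.1 : ℕ)) hcon
      omega
    · rw [deletionInvolution_of_ge h]
      intro hcon
      have h1 : (i : ℕ) + 1 = (j : ℕ) :=
        congrArg (fun q : Fin (d + 2) × Fin (d + 1) => (q.1 : ℕ)) hcon
      have h2 : (j : ℕ) = (i : ℕ) :=
        congrArg (fun q : Fin (d + 2) × Fin (d + 1) => (q.2 : ℕ)) hcon
      omega
  · intro a; exact Finset.mem_univ _
  · -- the pairing is an involution
    rintro ⟨j, i⟩
    by_cases h : (i : ℕ) < (j : ℕ)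
    · rw [deletionInvolution_of_lt h, deletionInvolution_of_ge (by simp; omega)]
      apply Prod.ext
      · apply Fin.ext; simp; omega
      · apply Fin.ext; simp
    · rw [deletionInvolution_of_ge h, deletionInvolution_of_lt (by simp; omega)]
      apply Prod.ext
      · apply Fin.ext; simp
      · apply Fin.ext; simp

/-- The augmented chain complex of admissible words: in degree `d` the free abelian group
on words of length `d` (so degree `0` is the augmentation copy of `ℤ`, spanned by the
empty word, and a word of length `d` is a simplex of dimension `d - 1`), with boundary
the alternating sum of entry deletions. -/
noncomputable def wordComplex : ChainComplex (ModuleCat ℤ) ℕ :=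
  ChainComplex.of (fun d => ModuleCat.of ℤ (Word P d →₀ ℤ))
    (fun d => ModuleCat.ofHom (wordBoundary P hP d))
    (fun d => by
      have h := wordBoundary_comp_wordBoundary P hP d
      exact ModuleCat.hom_ext (LinearMap.ext fun x => DFunLike.congr_fun h x))

section Supported

variable {R X M : Type*} [Semiring R] [AddCommMonoid M] [Module R M] {s : Set X}

theorem Finsupp.eqOn_supported_of_single {f g : (X →₀ R) →ₗ[R] M}
    (h : ∀ x ∈ s, f (Finsupp.single x 1) = g (Finsupp.single x 1)) :
    Set.EqOn f g (Finsupp.supported R R s) := by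
  rw [Finsupp.supported_eq_span_single]
  exact LinearMap.eqOn_span' fun _ ⟨x, hx, hfx⟩ => hfx ▸ h x hx

theorem Finsupp.map_mem_supported_of_single {Y : Type*} {t : Set Y}
    {f : (X →₀ R) →ₗ[R] (Y →₀ R)}
    (h : ∀ x ∈ s, f (Finsupp.single x 1) ∈ Finsupp.supported R R t) {z : X →₀ R}
    (hz : z ∈ Finsupp.supported R R s) : f z ∈ Finsupp.supported R R t := by
  have hle : Finsupp.supported R R s ≤ (Finsupp.supported R R t).comap f := by
    rw [Finsupp.supported_eq_span_single, Submodule.span_le]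
    rintro _ ⟨x, hx, rfl⟩
    exact h x hx
  exact hle hz

end Supported

section RelativeBoundary

variable (frozen : α → Prop) [DecidablePred frozen]

/-- Zero when entry `j` is frozen or out of range. -/
def deletionSign (l : List α) (j : ℕ) : ℤ :=
  (-1) ^ j * l[j]?.elim 0 fun x => if frozen x then 0 else 1

theorem deletionSign_of_lt {l : List α} {j : ℕ} (hj : j < l.length) :
    deletionSign frozen l j = if frozen l[j] then 0 else (-1) ^ j := by
  rw [deletionSign, List.getElem?_eq_getElem hj, Option.elim_some]
  split_ifs <;> ring

theorem deletionSign_cons_zero (x : α) (l : List α) :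
    deletionSign frozen (x :: l) 0 = if frozen x then 0 else 1 := by
  simp [deletionSign_of_lt]

theorem deletionSign_cons_succ (x : α) (l : List α) (j : ℕ) :
    deletionSign frozen (x :: l) (j + 1) = -deletionSign frozen l j := by
  rw [deletionSign, deletionSign, List.getElem?_cons_succ, pow_succ]
  ring

theorem deletionSign_eraseIdx_add_deletionSign_eraseIdx (l : List α) {i j : ℕ} (hij : i < j) :
    deletionSign frozen l j * deletionSign frozen (l.eraseIdx j) i
      + deletionSign frozen l i * deletionSign frozen (l.eraseIdx i) (j - 1) = 0 := by
  obtain ⟨k, rfl⟩ : ∃ k, j = k + 1 := ⟨j - 1, by omega⟩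
  have hi : (l.eraseIdx (k + 1))[i]? = l[i]? := by
    rw [List.getElem?_eraseIdx, if_pos (by omega)]
  have hk : (l.eraseIdx i)[k]? = l[k + 1]? := by
    rw [List.getElem?_eraseIdx, if_neg (by omega)]
  simp only [deletionSign, hi, Nat.add_sub_cancel, hk, pow_succ]
  ring

theorem deletionInvolution_involutive (d : ℕ) : Function.Involutive (deletionInvolution d) := by
  rintro ⟨j, i⟩
  by_cases h : (i : ℕ) < j
  · rw [deletionInvolution_of_lt h, deletionInvolution_of_ge (by simp; omega)]
    ext <;> simp; omega
  · rw [deletionInvolution_of_ge h, deletionInvolution_of_lt (by simp; omega)]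
    ext <;> simp

theorem deletionInvolution_ne_self {d : ℕ} (p : Fin (d + 2) × Fin (d + 1)) :
    deletionInvolution d p ≠ p := by
  obtain ⟨j, i⟩ := p
  by_cases h : (i : ℕ) < j
  · rw [deletionInvolution_of_lt h, Ne, Prod.ext_iff, Fin.ext_iff]
    simp only
    omega
  · rw [deletionInvolution_of_ge h, Ne, Prod.ext_iff, Fin.ext_iff, Fin.ext_iff]
    simp only
    omega

noncomputable def relBoundary (d : ℕ) :
    (Word P (d + 1) →₀ ℤ) →ₗ[ℤ] (Word P d →₀ ℤ) :=
  Finsupp.lsum ℤ fun l =>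
    ∑ j : Fin (d + 1), deletionSign frozen l.1 j • Finsupp.lsingle (eraseWord P hP l j)

theorem relBoundary_single {d : ℕ} (l : Word P (d + 1)) (b : ℤ) :
    relBoundary P hP frozen d (Finsupp.single l b)
      = ∑ j : Fin (d + 1),
          deletionSign frozen l.1 j • Finsupp.single (eraseWord P hP l j) b := by
  simp [relBoundary]

theorem relBoundary_eq_wordBoundary (hfrozen : ∀ x, ¬ frozen x) (d : ℕ) :
    relBoundary P hP frozen d = wordBoundary P hP d := by
  refine Finsupp.lhom_ext fun l b => ?_
  rw [relBoundary_single, wordBoundary_single]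
  refine Finset.sum_congr rfl fun j _ => ?_
  rw [deletionSign_of_lt frozen (by rw [l.2.2]; exact j.2), if_neg (hfrozen _)]

theorem eraseWord_eraseWord_deletionInvolution {d : ℕ} (l : Word P (d + 2)) {j : Fin (d + 2)}
    {i : Fin (d + 1)} (h : (i : ℕ) < j) :
    eraseWord P hP (eraseWord P hP l (deletionInvolution d (j, i)).1)
        (deletionInvolution d (j, i)).2
      = eraseWord P hP (eraseWord P hP l j) i := by
  rw [deletionInvolution_of_lt h]
  refine Subtype.ext ?_
  change (l.1.eraseIdx i).eraseIdx (j - 1) = (l.1.eraseIdx j).eraseIdx i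
  rw [eraseIdx_eraseIdx_comm l.1 i (j - 1) (by omega), Nat.sub_add_cancel (by omega)]

theorem relBoundary_relBoundary_single {d : ℕ} (l : Word P (d + 2)) (b : ℤ) :
    relBoundary P hP frozen d (relBoundary P hP frozen (d + 1) (Finsupp.single l b)) = 0 := by
  let term : Fin (d + 2) × Fin (d + 1) → (Word P d →₀ ℤ) := fun p =>
    (deletionSign frozen l.1 p.1 * deletionSign frozen (eraseWord P hP l p.1).1 p.2) •
      Finsupp.single (eraseWord P hP (eraseWord P hP l p.1) p.2) b
  have term_add : ∀ p, (p.2 : ℕ) < p.1 → term p + term (deletionInvolution d p) = 0 := by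
    rintro ⟨j, i⟩ (h : (i : ℕ) < j)
    simp only [term]
    rw [eraseWord_eraseWord_deletionInvolution P hP l h, ← add_smul]
    simp only [deletionInvolution_of_lt h]
    convert zero_smul ℤ (Finsupp.single (eraseWord P hP (eraseWord P hP l j) i) b)
    exact deletionSign_eraseIdx_add_deletionSign_eraseIdx frozen l.1 h
  have hsum : relBoundary P hP frozen d (relBoundary P hP frozen (d + 1) (Finsupp.single l b))
      = ∑ p, term p := by
    simp only [relBoundary_single, map_sum, map_smul, Finset.smul_sum, smul_smul,
      ← Fintype.sum_prod_type', term]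
  rw [hsum]
  refine Finset.sum_ninvolution (deletionInvolution d) (fun p => ?_)
    (fun p _ => deletionInvolution_ne_self p) (fun _ => Finset.mem_univ _)
    (deletionInvolution_involutive d)
  by_cases h : (p.2 : ℕ) < p.1
  · exact term_add p h
  · have h' : ((deletionInvolution d p).2 : ℕ) < (deletionInvolution d p).1 := by
      obtain ⟨j, i⟩ := p
      rw [deletionInvolution_of_ge h]
      simp only at h ⊢
      omega
    rw [add_comm, ← term_add _ h', deletionInvolution_involutive d p]

theorem relBoundary_relBoundary {d : ℕ} (z : Word P (d + 2) →₀ ℤ) :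
    relBoundary P hP frozen d (relBoundary P hP frozen (d + 1) z) = 0 := by
  induction z using Finsupp.induction_linear with
  | zero => simp
  | add x y hx hy => rw [map_add, map_add, hx, hy, add_zero]
  | single l b => exact relBoundary_relBoundary_single P hP frozen l b

def IsRelCycle : {m : ℕ} → (Word P m →₀ ℤ) → Prop
  | 0, _ => True
  | d + 1, z => relBoundary P hP frozen d z = 0

theorem wordComplex_d (d : ℕ) :
    (wordComplex P hP).d (d + 1) d = ModuleCat.ofHom (wordBoundary P hP d) :=
  ChainComplex.of_d (fun d => ModuleCat.of ℤ (Word P d →₀ ℤ))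
    (fun d => ModuleCat.ofHom (wordBoundary P hP d)) d

theorem wordComplex_exactAt_of_forall_isRelCycle (hfrozen : ∀ x, ¬ frozen x) (m : ℕ)
    (h : ∀ z : Word P m →₀ ℤ, IsRelCycle P hP frozen z →
      ∃ y, relBoundary P hP frozen m y = z) :
    (wordComplex P hP).ExactAt m := by
  have hd := relBoundary_eq_wordBoundary P hP frozen hfrozen
  cases m with
  | zero =>
    rw [HomologicalComplex.exactAt_iff' _ 1 0 0 (by simp) (by simp),
      ShortComplex.moduleCat_exact_iff]
    intro z _
    obtain ⟨y, hy⟩ := h z trivial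
    refine ⟨y, ?_⟩
    simp only [HomologicalComplex.shortComplexFunctor'_obj_f, wordComplex_d]
    rwa [← hd]
  | succ d =>
    rw [HomologicalComplex.exactAt_iff' _ (d + 2) (d + 1) d (by simp) (by simp),
      ShortComplex.moduleCat_exact_iff]
    intro z hz
    simp only [HomologicalComplex.shortComplexFunctor'_obj_g, wordComplex_d, ← hd] at hz
    obtain ⟨y, hy⟩ := h z hz
    refine ⟨y, ?_⟩
    simp only [HomologicalComplex.shortComplexFunctor'_obj_f, wordComplex_d]
    rwa [← hd]

end RelativeBoundary

section InjectiveWords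

variable {β : Type} (π : α → β)

theorem nodup_map_eraseIdx (l : List α) (j : ℕ) (h : (l.map π).Nodup) :
    ((l.eraseIdx j).map π).Nodup :=
  ((List.eraseIdx_sublist l j).map π).nodup h

abbrev InjWord (m : ℕ) : Type := Word (fun l : List α => (l.map π).Nodup) m

variable [DecidableEq β]

local notation "∂[" T "]" => relBoundary _ (nodup_map_eraseIdx π) (fun x => π x ∈ T)

local notation "IsCycle[" T "]" => IsRelCycle _ (nodup_map_eraseIdx π) (fun x => π x ∈ T)

def coords {m : ℕ} (l : InjWord π m) : Finset β := (l.1.map π).toFinset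

theorem mem_coords {m : ℕ} {l : InjWord π m} {b : β} : b ∈ coords π l ↔ b ∈ l.1.map π :=
  List.mem_toFinset

theorem card_coords {m : ℕ} (l : InjWord π m) : (coords π l).card = m := by
  rw [coords, List.toFinset_card_of_nodup l.2.1, List.length_map, l.2.2]

theorem coords_eraseWord_subset {d : ℕ} (l : InjWord π (d + 1)) (j : Fin (d + 1)) :
    coords π (eraseWord _ (nodup_map_eraseIdx π) l j) ⊆ coords π l := fun _ hb =>
  (mem_coords π).2 (((List.eraseIdx_sublist _ _).map π).subset ((mem_coords π).1 hb))

theorem mem_coords_eraseWord {d : ℕ} (l : InjWord π (d + 1)) (j : Fin (d + 1))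
    (hj : (j : ℕ) < l.1.length) {b : β} :
    b ∈ coords π (eraseWord _ (nodup_map_eraseIdx π) l j)
      ↔ π l.1[(j : ℕ)] ≠ b ∧ b ∈ coords π l := by
  have hl : (l.1.map π).Nodup := l.2.1
  rw [mem_coords, mem_coords]
  change b ∈ (l.1.eraseIdx j).map π ↔ _
  rw [← List.eraseIdx_map, ← hl.erase_getElem j (by simpa using hj), hl.mem_erase_iff,
    List.getElem_map, ne_comm]

theorem filter_relBoundary (T : Finset β) (a : β) {d : ℕ} (z : InjWord π (d + 1) →₀ ℤ) :
    (∂[T] d z).filter (fun l => a ∈ coords π l)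
      = ∂[insert a T] d (z.filter fun l => a ∈ coords π l) := by
  induction z using Finsupp.induction_linear with
  | zero => simp only [map_zero, Finsupp.filter_zero]
  | add x y hx hy => rw [map_add, Finsupp.filter_add, hx, hy, Finsupp.filter_add, map_add]
  | single l b =>
    by_cases ha : a ∈ coords π l
    · rw [Finsupp.filter_single_of_pos (fun l => a ∈ coords π l) ha, relBoundary_single,
        relBoundary_single, Finsupp.filter_sum]
      refine Finset.sum_congr rfl fun j _ => ?_
      have hj : (j : ℕ) < l.1.length := by rw [l.2.2]; exact j.2
      rw [Finsupp.filter_smul, deletionSign_of_lt _ hj, deletionSign_of_lt _ hj]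
      by_cases hja : π l.1[(j : ℕ)] = a
      · rw [Finsupp.filter_single_of_neg (fun l => a ∈ coords π l)
          (by simp [mem_coords_eraseWord π l j hj, hja])]
        simp [hja]
      · rw [Finsupp.filter_single_of_pos (fun l => a ∈ coords π l)
          ((mem_coords_eraseWord π l j hj).2 ⟨hja, ha⟩)]
        simp [hja]
    · rw [Finsupp.filter_single_of_neg (fun l => a ∈ coords π l) ha, map_zero,
        relBoundary_single, Finsupp.filter_sum]
      refine Finset.sum_eq_zero fun j _ => ?_
      rw [Finsupp.filter_smul, Finsupp.filter_single_of_neg (fun l => a ∈ coords π l)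
        (fun h => ha (coords_eraseWord_subset π l j h)), smul_zero]

/-- With `∂[T]`, these span the complex of words on the free coordinates `S` with the
coordinates of `T` frozen in place. -/
def admissibleWords (S T : Finset β) (m : ℕ) : Set (InjWord π m) :=
  {l | T ⊆ coords π l ∧ coords π l ⊆ S ∪ T}

theorem eq_zero_of_mem_supported_admissibleWords {S T : Finset β} {m : ℕ} (hm : m < T.card)
    {z : InjWord π m →₀ ℤ}
    (hz : z ∈ Finsupp.supported ℤ ℤ (admissibleWords π S T m)) :
    z = 0 := by
  refine Finsupp.ext fun l => (Finsupp.mem_supported' ℤ z).1 hz l fun hl => ?_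
  have := Finset.card_le_card hl.1
  rw [card_coords] at this
  omega

theorem relBoundary_mem_supported_admissibleWords {S T : Finset β} {d : ℕ}
    {z : InjWord π (d + 1) →₀ ℤ}
    (hz : z ∈ Finsupp.supported ℤ ℤ (admissibleWords π S T (d + 1))) :
    ∂[T] d z ∈ Finsupp.supported ℤ ℤ (admissibleWords π S T d) := by
  refine Finsupp.map_mem_supported_of_single (fun l hl => ?_) hz
  rw [relBoundary_single]
  refine Submodule.sum_mem _ fun j _ => ?_
  have hj : (j : ℕ) < l.1.length := by rw [l.2.2]; exact j.2
  rw [deletionSign_of_lt _ hj]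
  split_ifs with hjT
  · rw [zero_smul]
    exact Submodule.zero_mem _
  refine Submodule.smul_mem _ _ (Finsupp.single_mem_supported ℤ _ ⟨fun b hb => ?_, ?_⟩)
  · exact (mem_coords_eraseWord π l j hj).2 ⟨fun h => hjT (h ▸ hb), hl.1 hb⟩
  · exact (coords_eraseWord_subset π l j).trans hl.2

theorem admissibleWords_insert_subset (S T : Finset β) (a : β) (m : ℕ) :
    admissibleWords π S (insert a T) m ⊆ admissibleWords π (insert a S) T m := fun l hl =>
  ⟨(Finset.subset_insert a T).trans hl.1,
    by simpa [Finset.union_insert, Finset.insert_union] using hl.2⟩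

theorem filter_mem_supported_admissibleWords {S T : Finset β} {a : β} {m : ℕ}
    {z : InjWord π m →₀ ℤ}
    (hz : z ∈ Finsupp.supported ℤ ℤ (admissibleWords π (insert a S) T m)) :
    z.filter (fun l => a ∈ coords π l)
      ∈ Finsupp.supported ℤ ℤ (admissibleWords π S (insert a T) m) := by
  intro l hl
  rw [Finset.mem_coe, Finsupp.support_filter, Finset.mem_filter] at hl
  obtain ⟨hT, hST⟩ := hz hl.1
  refine ⟨Finset.insert_subset hl.2 hT, ?_⟩
  simpa [Finset.union_insert, Finset.insert_union] using hST

theorem filter_eq_self_of_mem_supported_admissibleWords {S T : Finset β} {a : β} {m : ℕ}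
    {y : InjWord π m →₀ ℤ}
    (hy : y ∈ Finsupp.supported ℤ ℤ (admissibleWords π S (insert a T) m)) :
    y.filter (fun l => a ∈ coords π l) = y :=
  (Finsupp.filter_eq_self_iff _ _).2 fun _ hl =>
    (hy (Finsupp.mem_support_iff.2 hl)).1 (Finset.mem_insert_self a T)

theorem isRelCycle_filter {T : Finset β} (a : β) {m : ℕ} {z : InjWord π m →₀ ℤ}
    (hz : IsCycle[T] z) : IsCycle[insert a T] (z.filter fun l => a ∈ coords π l) := by
  cases m with
  | zero => trivial
  | succ d =>
    change ∂[insert a T] d _ = 0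
    rw [← filter_relBoundary, show ∂[T] d z = 0 from hz, Finsupp.filter_zero]

theorem isRelCycle_sub_relBoundary {T : Finset β} {m : ℕ} {z : InjWord π m →₀ ℤ}
    (hz : IsCycle[T] z) (y : InjWord π (m + 1) →₀ ℤ) : IsCycle[T] (z - ∂[T] m y) := by
  cases m with
  | zero => trivial
  | succ d =>
    change ∂[T] d _ = 0
    rw [map_sub, relBoundary_relBoundary, sub_zero]
    exact hz

def consWord (x : α) {m : ℕ} (l : InjWord π m) (h : π x ∉ coords π l) :
    InjWord π (m + 1) :=
  ⟨x :: l.1, List.nodup_cons.2 ⟨fun h' => h ((mem_coords π).2 h'), l.2.1⟩, by simp [l.2.2]⟩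

theorem coords_consWord (x : α) {m : ℕ} (l : InjWord π m) (h : π x ∉ coords π l) :
    coords π (consWord π x l h) = insert (π x) (coords π l) := by
  simp [coords, consWord]

theorem eraseWord_consWord_zero (x : α) {m : ℕ} (l : InjWord π m) (h : π x ∉ coords π l) :
    eraseWord _ (nodup_map_eraseIdx π) (consWord π x l h) 0 = l :=
  Subtype.ext (List.eraseIdx_cons_zero (a := x))

theorem eraseWord_consWord_succ (x : α) {d : ℕ} (l : InjWord π (d + 1))
    (h : π x ∉ coords π l) (j : Fin (d + 1)) :
    eraseWord _ (nodup_map_eraseIdx π) (consWord π x l h) j.succ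
      = consWord π x (eraseWord _ (nodup_map_eraseIdx π) l j)
          fun h' => h (coords_eraseWord_subset π l j h') :=
  Subtype.ext (List.eraseIdx_cons_succ ..)

noncomputable def cone (x : α) (m : ℕ) :
    (InjWord π m →₀ ℤ) →ₗ[ℤ] (InjWord π (m + 1) →₀ ℤ) :=
  Finsupp.lsum ℤ fun l =>
    if h : π x ∈ coords π l then 0 else Finsupp.lsingle (consWord π x l h)

theorem cone_single (x : α) {m : ℕ} (l : InjWord π m) (h : π x ∉ coords π l) (b : ℤ) :
    cone π x m (Finsupp.single l b) = Finsupp.single (consWord π x l h) b := by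
  simp [cone, h]

theorem relBoundary_cone_zero {T : Finset β} {x : α} (hx : π x ∉ T)
    (z : InjWord π 0 →₀ ℤ) :
    ∂[T] 0 (cone π x 0 z) = z := by
  induction z using Finsupp.induction_linear with
  | zero => simp only [map_zero]
  | add y z hy hz => rw [map_add, map_add, hy, hz]
  | single l b =>
    have hl : π x ∉ coords π l := by simp [coords, List.length_eq_zero_iff.1 l.2.2]
    rw [cone_single π x l hl, relBoundary_single, Fin.sum_univ_one]
    change deletionSign _ (x :: l.1) 0 • _ = _
    rw [deletionSign_cons_zero, if_neg hx, one_smul, eraseWord_consWord_zero]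

theorem relBoundary_cone_succ {T : Finset β} {x : α} (hx : π x ∉ T) {d : ℕ}
    {z : InjWord π (d + 1) →₀ ℤ}
    (hz : z ∈ Finsupp.supported ℤ ℤ {l | π x ∉ coords π l}) :
    ∂[T] (d + 1) (cone π x (d + 1) z) = z - cone π x d (∂[T] d z) := by
  refine Finsupp.eqOn_supported_of_single (f := (∂[T] (d + 1)).comp (cone π x (d + 1)))
    (g := LinearMap.id - (cone π x d).comp (∂[T] d)) (fun l hl => ?_) hz
  simp only [LinearMap.comp_apply, LinearMap.sub_apply, LinearMap.id_apply]
  rw [cone_single π x l hl, relBoundary_single, Fin.sum_univ_succ, relBoundary_single, map_sum,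
    sub_eq_add_neg, ← Finset.sum_neg_distrib]
  change deletionSign _ (x :: l.1) 0 • _
      + ∑ j : Fin (d + 1), deletionSign _ (x :: l.1) (j + 1) • _ = _
  rw [deletionSign_cons_zero, if_neg hx, one_smul, eraseWord_consWord_zero]
  congr 1
  refine Finset.sum_congr rfl fun j _ => ?_
  rw [deletionSign_cons_succ, eraseWord_consWord_succ, map_smul, cone_single, neg_smul]

theorem relBoundary_cone {T : Finset β} {x : α} (hx : π x ∉ T) {m : ℕ}
    {z : InjWord π m →₀ ℤ} (hz : z ∈ Finsupp.supported ℤ ℤ {l | π x ∉ coords π l})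
    (hcyc : IsCycle[T] z) : ∂[T] m (cone π x m z) = z := by
  cases m with
  | zero => exact relBoundary_cone_zero π hx z
  | succ d =>
    rw [relBoundary_cone_succ π hx hz, show ∂[T] d z = 0 from hcyc, map_zero, sub_zero]

theorem cone_mem_supported_admissibleWords {S T : Finset β} {x : α} (hx : π x ∈ S) {m : ℕ}
    {z : InjWord π m →₀ ℤ}
    (hz : z ∈ Finsupp.supported ℤ ℤ (admissibleWords π S T m)) :
    cone π x m z ∈ Finsupp.supported ℤ ℤ (admissibleWords π S T (m + 1)) := by
  refine Finsupp.map_mem_supported_of_single (fun l hl => ?_) hz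
  by_cases h : π x ∈ coords π l
  · simp [cone, h]
  rw [cone_single π x l h]
  refine Finsupp.single_mem_supported ℤ _ ?_
  rw [admissibleWords, Set.mem_ofPred_eq, coords_consWord]
  exact ⟨hl.1.trans (Finset.subset_insert _ _),
    Finset.insert_subset (Finset.mem_union_left T hx) hl.2⟩

theorem sub_relBoundary_mem_supported_avoiding {S T : Finset β} {a : β} {m : ℕ}
    {z : InjWord π m →₀ ℤ} {y : InjWord π (m + 1) →₀ ℤ}
    (hy : y ∈ Finsupp.supported ℤ ℤ (admissibleWords π S (insert a T) (m + 1)))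
    (hyz : ∂[insert a T] m y = z.filter fun l => a ∈ coords π l) :
    z - ∂[T] m y ∈ Finsupp.supported ℤ ℤ {l | a ∉ coords π l} := by
  have hfilter : (z - ∂[T] m y).filter (fun l => a ∈ coords π l) = 0 := by
    rw [Finsupp.filter_sub, filter_relBoundary,
      filter_eq_self_of_mem_supported_admissibleWords π hy, hyz, sub_self]
  exact (Finsupp.mem_supported' _ _).2 fun l hl =>
    (Finsupp.filter_eq_zero_iff _ _).1 hfilter l (not_not.1 hl)

theorem exists_relBoundary_eq_of_isRelCycle (hπ : Function.Surjective π) {m : ℕ}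
    (S T : Finset β) (hST : Disjoint S T) (hm : m < S.card + T.card) {z : InjWord π m →₀ ℤ}
    (hz : z ∈ Finsupp.supported ℤ ℤ (admissibleWords π S T m)) (hcyc : IsCycle[T] z) :
    ∃ y ∈ Finsupp.supported ℤ ℤ (admissibleWords π S T (m + 1)), ∂[T] m y = z := by
  induction S using Finset.induction_on generalizing T z with
  | empty =>
    refine ⟨0, Submodule.zero_mem _, ?_⟩
    rw [map_zero, eq_zero_of_mem_supported_admissibleWords π (by simpa using hm) hz]
  | insert a S ha ih =>
    have haT : a ∉ T := Finset.disjoint_left.1 hST (Finset.mem_insert_self a S)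
    obtain ⟨y, hy, hyz⟩ := ih (insert a T)
      (Finset.disjoint_insert_right.2 ⟨ha, hST.mono_left (Finset.subset_insert a S)⟩)
      (by rw [Finset.card_insert_of_notMem haT]; rw [Finset.card_insert_of_notMem ha] at hm; omega)
      (filter_mem_supported_admissibleWords π hz) (isRelCycle_filter π a hcyc)
    have hy' := Finsupp.supported_mono (admissibleWords_insert_subset π S T a (m + 1)) hy
    have hfree := sub_relBoundary_mem_supported_avoiding π hy hyz
    obtain ⟨x, rfl⟩ := hπ a
    refine ⟨y + cone π x m (z - ∂[T] m y), Submodule.add_mem _ hy'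
      (cone_mem_supported_admissibleWords π (Finset.mem_insert_self _ S)
        (Submodule.sub_mem _ hz (relBoundary_mem_supported_admissibleWords π hy'))), ?_⟩
    rw [map_add, relBoundary_cone π haT hfree (isRelCycle_sub_relBoundary π hcyc y),
      add_sub_cancel]

theorem isZero_homology_wordComplex [Fintype β] (hπ : Function.Surjective π) {d : ℕ}
    (hd : d ≠ Fintype.card β) :
    Limits.IsZero ((wordComplex _ (nodup_map_eraseIdx π)).homology d) := by
  rw [← HomologicalComplex.exactAt_iff_isZero_homology]
  refine wordComplex_exactAt_of_forall_isRelCycle _ _ (fun x => π x ∈ (∅ : Finset β))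
    (by simp) d fun z hz => ?_
  rcases hd.lt_or_gt with hlt | hgt
  · obtain ⟨y, -, hy⟩ := exists_relBoundary_eq_of_isRelCycle π hπ Finset.univ ∅
      (Finset.disjoint_empty_right _) (by simpa using hlt)
      ((Finsupp.mem_supported' _ _).2 fun l hl => (hl ⟨by simp, by simp⟩).elim) hz
    exact ⟨y, hy⟩
  · have : IsEmpty (InjWord π d) := ⟨fun l => by
      have := Finset.card_le_univ (coords π l)
      rw [card_coords] at this
      omega⟩
    exact ⟨0, Subsingleton.elim _ _⟩

end InjectiveWords

theorem signedInjectiveWordsComplex_spherical_general (n : ℕ) (d : ℕ) (hd : d ≠ n) :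
    Limits.IsZero ((wordComplex
      (fun l : List (Fin n × ZMod 2) => (l.map Prod.fst).Nodup)
      (fun l j h => ((List.eraseIdx_sublist l j).map Prod.fst).nodup h)).homology d) :=
  isZero_homology_wordComplex Prod.fst Prod.fst_surjective (by simpa using hd)

/-- Homological sphericity of the complex of signed injective words: for `n ≥ 1`, the
augmented chain complex of words on `Fin n × ZMod 2` with pairwise distinct first
coordinates (whose degree-`d` part is the free abelian group on such `d`-tuples, so
that degree `d` corresponds to homological degree `i = d - 1`, the empty word spanning
the augmentation `ℤ` in degree `-1`) is exact in every degree except `n`; i.e. the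
reduced homology `H̃_i` vanishes for `i ≠ n - 1`. -/
theorem signedInjectiveWordsComplex_spherical (n : ℕ) (hn : 1 ≤ n) (d : ℕ) (hd : d ≠ n) :
    Limits.IsZero ((wordComplex
      (fun l : List (Fin n × ZMod 2) => (l.map Prod.fst).Nodup)
      (fun l j h => ((List.eraseIdx_sublist l j).map Prod.fst).nodup h)).homology d) :=
  signedInjectiveWordsComplex_spherical_general n d hd
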